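/- The identity operator on ℓ^∞_ω(ℝ), the Banach lattice of bounded real-valued countably supported functions on ℝ, is a σ-Levi operator but not a quasi Levi operator: the increasing net of indicator functions of finite subsets of ℝ (directed by inclusion) is norm-bounded but not order-Cauchy. -/

import Mathlib

/-- Order convergence of a net. -/
def OConvNet {ι F : Type*} [Preorder ι] [Lattice F] [AddCommGroup F]
    (x : ι → F) (x₀ : F) : Prop :=
  ∃ D : Set F, D.Nonempty ∧ DirectedOn (· ≥ ·) D ∧ IsGLB D 0 ∧
    ∀ y ∈ D, ∃ α₀, ∀ α, α₀ ≤ α → |x α - x₀| ≤ y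

/-- Order convergence of a sequence. -/
def OConvSeq {F : Type*} [Lattice F] [AddCommGroup F] (x : ℕ → F) (x₀ : F) : Prop :=
  ∃ y : ℕ → F, Antitone y ∧ IsGLB (Set.range y) 0 ∧
    ∀ m, ∃ n₀, ∀ n, n₀ ≤ n → |x n - x₀| ≤ y m

/-- A net is order-Cauchy if its double net of differences order converges to `0`. -/
def OCauchyNet {ι F : Type*} [Preorder ι] [Lattice F] [AddCommGroup F]
    (x : ι → F) : Prop :=
  OConvNet (fun p : ι × ι => x p.1 - x p.2) (0 : F)

/-- A sequence is order-Cauchy if its double sequence of differences order converges to `0`. -/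
def OCauchySeq' {F : Type*} [Lattice F] [AddCommGroup F] (x : ℕ → F) : Prop :=
  OConvNet (fun p : ℕ × ℕ => x p.1 - x p.2) (0 : F)

section Maps
variable {E F : Type*} [Lattice E] [AddCommGroup E] [Norm E] [Lattice F] [AddCommGroup F]

def IsLeviMap (T : E → F) : Prop :=
  ∀ (ι : Type) [Nonempty ι] [Preorder ι] [IsDirected ι (· ≤ ·)],
    ∀ x : ι → E, Monotone x → (∃ C, ∀ α, ‖x α‖ ≤ C) →
      ∃ x₀ : E, OConvNet (fun α => T (x α)) (T x₀)

def IsSigmaLeviMap (T : E → F) : Prop :=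
  ∀ x : ℕ → E, Monotone x → (∃ C, ∀ n, ‖x n‖ ≤ C) →
    ∃ x₀ : E, OConvSeq (fun n => T (x n)) (T x₀)

def IsCqLeviMap (T : E → F) : Prop :=
  ∀ (ι : Type) [Nonempty ι] [Preorder ι] [IsDirected ι (· ≤ ·)],
    ∀ x : ι → E, Monotone x → (∃ C, ∀ α, ‖x α‖ ≤ C) →
      ∃ y₀ : F, OConvNet (fun α => T (x α)) y₀

def IsCqSigmaLeviMap (T : E → F) : Prop :=
  ∀ x : ℕ → E, Monotone x → (∃ C, ∀ n, ‖x n‖ ≤ C) →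
    ∃ y₀ : F, OConvSeq (fun n => T (x n)) y₀

def IsQLeviMap (T : E → F) : Prop :=
  ∀ (ι : Type) [Nonempty ι] [Preorder ι] [IsDirected ι (· ≤ ·)],
    ∀ x : ι → E, Monotone x → (∃ C, ∀ α, ‖x α‖ ≤ C) →
      OCauchyNet (fun α => T (x α))

def IsQSigmaLeviMap (T : E → F) : Prop :=
  ∀ x : ℕ → E, Monotone x → (∃ C, ∀ n, ‖x n‖ ≤ C) →
    OCauchySeq' (fun n => T (x n))

end Maps

open Filter Topology

/-- The subspace `c` of convergent real sequences. -/
def cSub : Submodule ℝ (ℕ → ℝ) where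
  carrier := {x | ∃ l : ℝ, Tendsto x atTop (nhds l)}
  add_mem' := by rintro x y ⟨l, hl⟩ ⟨m, hm⟩; exact ⟨l + m, hl.add hm⟩
  zero_mem' := ⟨0, tendsto_const_nhds⟩
  smul_mem' := by rintro c x ⟨l, hl⟩; exact ⟨c * l, hl.const_mul c⟩

/-- The subspace `c₀` of real null sequences. -/
def c0Sub : Submodule ℝ (ℕ → ℝ) where
  carrier := {x | Tendsto x atTop (nhds 0)}
  add_mem' := by intro x y hx hy; have := hx.add hy; rw [add_zero] at this; exact this
  zero_mem' := tendsto_const_nhds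
  smul_mem' := by intro c x hx; have := hx.const_mul c; rw [mul_zero] at this; exact this

/-- The subspace `ℓ^∞` of bounded real sequences. -/
def LinfSub : Submodule ℝ (ℕ → ℝ) where
  carrier := {x | ∃ C : ℝ, ∀ n, |x n| ≤ C}
  add_mem' := by
    rintro x y ⟨C, hC⟩ ⟨D, hD⟩
    exact ⟨C + D, fun n => (abs_add_le _ _).trans (add_le_add (hC n) (hD n))⟩
  zero_mem' := ⟨0, fun n => by simp⟩
  smul_mem' := by
    rintro c x ⟨C, hC⟩
    exact ⟨|c| * C, fun n => by
      simpa [abs_mul] using mul_le_mul_of_nonneg_left (hC n) (abs_nonneg c)⟩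

instance : Lattice cSub :=
  { (inferInstance : PartialOrder cSub) with
    sup := fun x y => ⟨x.1 ⊔ y.1, by
      obtain ⟨l, hl⟩ := x.2; obtain ⟨m, hm⟩ := y.2; exact ⟨l ⊔ m, hl.max hm⟩⟩
    inf := fun x y => ⟨x.1 ⊓ y.1, by
      obtain ⟨l, hl⟩ := x.2; obtain ⟨m, hm⟩ := y.2; exact ⟨l ⊓ m, hl.min hm⟩⟩
    le_sup_left := fun a b => (le_sup_left : a.1 ≤ a.1 ⊔ b.1)
    le_sup_right := fun a b => (le_sup_right : b.1 ≤ a.1 ⊔ b.1)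
    sup_le := fun a b c h₁ h₂ => (sup_le h₁ h₂ : a.1 ⊔ b.1 ≤ c.1)
    inf_le_left := fun a b => (inf_le_left : a.1 ⊓ b.1 ≤ a.1)
    inf_le_right := fun a b => (inf_le_right : a.1 ⊓ b.1 ≤ b.1)
    le_inf := fun a b c h₁ h₂ => (le_inf h₁ h₂ : a.1 ≤ b.1 ⊓ c.1) }

instance : Lattice c0Sub :=
  { (inferInstance : PartialOrder c0Sub) with
    sup := fun x y => ⟨x.1 ⊔ y.1, by
      have := x.2.max y.2; simp only [max_self] at this; exact this⟩
    inf := fun x y => ⟨x.1 ⊓ y.1, by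
      have := x.2.min y.2; simp only [min_self] at this; exact this⟩
    le_sup_left := fun a b => (le_sup_left : a.1 ≤ a.1 ⊔ b.1)
    le_sup_right := fun a b => (le_sup_right : b.1 ≤ a.1 ⊔ b.1)
    sup_le := fun a b c h₁ h₂ => (sup_le h₁ h₂ : a.1 ⊔ b.1 ≤ c.1)
    inf_le_left := fun a b => (inf_le_left : a.1 ⊓ b.1 ≤ a.1)
    inf_le_right := fun a b => (inf_le_right : a.1 ⊓ b.1 ≤ b.1)
    le_inf := fun a b c h₁ h₂ => (le_inf h₁ h₂ : a.1 ≤ b.1 ⊓ c.1) }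

instance : Lattice LinfSub :=
  { (inferInstance : PartialOrder LinfSub) with
    sup := fun x y => ⟨x.1 ⊔ y.1, by
      obtain ⟨C, hC⟩ := x.2; obtain ⟨D, hD⟩ := y.2
      exact ⟨C ⊔ D, fun n => by
        have h1 := hC n; have h2 := hD n
        simp only [Pi.sup_apply]
        rcases le_total (x.1 n) (y.1 n) with h | h
        · rw [sup_eq_right.2 h]; exact h2.trans le_sup_right
        · rw [sup_eq_left.2 h]; exact h1.trans le_sup_left⟩⟩
    inf := fun x y => ⟨x.1 ⊓ y.1, by
      obtain ⟨C, hC⟩ := x.2; obtain ⟨D, hD⟩ := y.2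
      exact ⟨C ⊔ D, fun n => by
        have h1 := hC n; have h2 := hD n
        simp only [Pi.inf_apply]
        rcases le_total (x.1 n) (y.1 n) with h | h
        · rw [inf_eq_left.2 h]; exact h1.trans le_sup_left
        · rw [inf_eq_right.2 h]; exact h2.trans le_sup_right⟩⟩
    le_sup_left := fun a b => (le_sup_left : a.1 ≤ a.1 ⊔ b.1)
    le_sup_right := fun a b => (le_sup_right : b.1 ≤ a.1 ⊔ b.1)
    sup_le := fun a b c h₁ h₂ => (sup_le h₁ h₂ : a.1 ⊔ b.1 ≤ c.1)
    inf_le_left := fun a b => (inf_le_left : a.1 ⊓ b.1 ≤ a.1)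
    inf_le_right := fun a b => (inf_le_right : a.1 ⊓ b.1 ≤ b.1)
    le_inf := fun a b c h₁ h₂ => (le_inf h₁ h₂ : a.1 ≤ b.1 ⊓ c.1) }

noncomputable instance : Norm cSub := ⟨fun x => ⨆ n, |x.1 n|⟩
noncomputable instance : Norm c0Sub := ⟨fun x => ⨆ n, |x.1 n|⟩
noncomputable instance : Norm LinfSub := ⟨fun x => ⨆ n, |x.1 n|⟩

/-- The Banach lattice `ℓ^∞_ω(ℝ)` of bounded real-valued functions on `ℝ` with countable
support. -/
def LinfOmega : Submodule ℝ (ℝ → ℝ) where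
  carrier := {x | (∃ C : ℝ, ∀ t, |x t| ≤ C) ∧ (Function.support x).Countable}
  add_mem' := by
    rintro x y ⟨⟨C, hC⟩, hxc⟩ ⟨⟨D, hD⟩, hyc⟩
    refine ⟨⟨C + D, fun t => (abs_add_le _ _).trans (add_le_add (hC t) (hD t))⟩, ?_⟩
    exact ((hxc.union hyc).mono (Function.support_add x y))
  zero_mem' := ⟨⟨0, fun t => by simp⟩, by simp⟩
  smul_mem' := by
    rintro c x ⟨⟨C, hC⟩, hxc⟩
    refine ⟨⟨|c| * C, fun t => by
      simpa [abs_mul] using mul_le_mul_of_nonneg_left (hC t) (abs_nonneg c)⟩, ?_⟩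
    exact hxc.mono (Function.support_const_smul_subset c x)

instance : Lattice LinfOmega :=
  { (inferInstance : PartialOrder LinfOmega) with
    sup := fun x y => ⟨x.1 ⊔ y.1, by
      obtain ⟨⟨C, hC⟩, hxc⟩ := x.2; obtain ⟨⟨D, hD⟩, hyc⟩ := y.2
      refine ⟨⟨C ⊔ D, fun t => ?_⟩, ?_⟩
      · simp only [Pi.sup_apply]
        rcases le_total (x.1 t) (y.1 t) with h | h
        · rw [sup_eq_right.2 h]; exact (hD t).trans le_sup_right
        · rw [sup_eq_left.2 h]; exact (hC t).trans le_sup_left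
      · refine ((hxc.union hyc).mono ?_)
        intro t ht
        simp only [Function.mem_support, Pi.sup_apply] at ht
        by_contra hmem
        simp only [Set.mem_union, Function.mem_support, not_or, not_not] at hmem
        rw [hmem.1, hmem.2] at ht; simp at ht⟩
    inf := fun x y => ⟨x.1 ⊓ y.1, by
      obtain ⟨⟨C, hC⟩, hxc⟩ := x.2; obtain ⟨⟨D, hD⟩, hyc⟩ := y.2
      refine ⟨⟨C ⊔ D, fun t => ?_⟩, ?_⟩
      · simp only [Pi.inf_apply]
        rcases le_total (x.1 t) (y.1 t) with h | h
        · rw [inf_eq_left.2 h]; exact (hC t).trans le_sup_left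
        · rw [inf_eq_right.2 h]; exact (hD t).trans le_sup_right
      · refine ((hxc.union hyc).mono ?_)
        intro t ht
        simp only [Function.mem_support, Pi.inf_apply] at ht
        by_contra hmem
        simp only [Set.mem_union, Function.mem_support, not_or, not_not] at hmem
        rw [hmem.1, hmem.2] at ht; simp at ht⟩
    le_sup_left := fun a b => (le_sup_left : a.1 ≤ a.1 ⊔ b.1)
    le_sup_right := fun a b => (le_sup_right : b.1 ≤ a.1 ⊔ b.1)
    sup_le := fun a b c h₁ h₂ => (sup_le h₁ h₂ : a.1 ⊔ b.1 ≤ c.1)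
    inf_le_left := fun a b => (inf_le_left : a.1 ⊓ b.1 ≤ a.1)
    inf_le_right := fun a b => (inf_le_right : a.1 ⊓ b.1 ≤ b.1)
    le_inf := fun a b c h₁ h₂ => (le_inf h₁ h₂ : a.1 ≤ b.1 ⊓ c.1) }

noncomputable instance : Norm LinfOmega := ⟨fun x => ⨆ t, |x.1 t|⟩

/-- The indicator function of a finite set of reals, as an element of `ℓ^∞_ω(ℝ)`. -/
noncomputable def finIndicator (s : Finset ℝ) : LinfOmega :=
  ⟨fun t => if t ∈ s then 1 else 0, by
    refine ⟨⟨1, fun t => by dsimp only; split <;> simp⟩, ?_⟩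
    refine (s.countable_toSet).mono ?_
    intro t ht
    simp only [Function.mem_support] at ht
    by_contra h
    rw [if_neg (by simpa using h)] at ht
    exact ht rfl⟩

/-! A norm-bounded countable family in `ℓ^∞_ω(ℝ)` has its pointwise supremum as least upper
bound, since a countable union of countable supports is countable; an increasing sequence
order-converges to its supremum. On the other hand an order bound `y` for the differences of the
net of finite indicators beyond an index `(a, b)` must be `≥ 1` at every `t ∉ a ∪ b`, as witnessed
by `finIndicator (insert t (a ∪ b)) - finIndicator (a ∪ b)`; so `y` would have co-finite, hence
uncountable, support. -/

section OrderConvergence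

variable {F : Type*} [Lattice F] [AddCommGroup F] [IsOrderedAddMonoid F]

theorem oConvSeq_of_monotone_of_isLUB {x : ℕ → F} {x₀ : F} (hx : Monotone x)
    (h : IsLUB (Set.range x) x₀) : OConvSeq x x₀ := by
  have hle : ∀ n, x n ≤ x₀ := fun n => h.1 ⟨n, rfl⟩
  refine ⟨fun m => x₀ - x m, fun m n hmn => sub_le_sub_left (hx hmn) x₀, ?_, fun m => ⟨m, ?_⟩⟩
  · refine ⟨Set.forall_mem_range.2 fun m => sub_nonneg.2 (hle m), fun w hw => ?_⟩
    have hbound : ∀ m, x m ≤ x₀ - w := fun m => le_sub_comm.1 (hw ⟨m, rfl⟩)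
    simpa using h.2 (Set.forall_mem_range.2 hbound)
  · intro n hmn
    rw [abs_sub_comm, abs_of_nonneg (sub_nonneg.2 (hle n))]
    exact sub_le_sub_left (hx hmn) x₀

variable [Norm F]

theorem isSigmaLeviMap_id_of_exists_isLUB
    (h : ∀ x : ℕ → F, Monotone x → (∃ C, ∀ n, ‖x n‖ ≤ C) → ∃ x₀, IsLUB (Set.range x) x₀) :
    IsSigmaLeviMap (id : F → F) := fun x hx hC =>
  (h x hx hC).imp fun _ => oConvSeq_of_monotone_of_isLUB hx

end OrderConvergence

namespace LinfOmega

@[simp] theorem coe_abs (a : LinfOmega) : (|a|).1 = |a.1| := rfl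

@[simp] theorem coe_sub (a b : LinfOmega) : (a - b).1 = a.1 - b.1 := rfl

theorem abs_apply_le_of_norm_le {a : LinfOmega} {C : ℝ} (h : ‖a‖ ≤ C) (t : ℝ) :
    |a.1 t| ≤ C := by
  obtain ⟨⟨B, hB⟩, -⟩ := a.2
  exact (le_ciSup ⟨B, Set.forall_mem_range.2 hB⟩ t).trans h

theorem norm_le_of_forall_abs_apply_le {a : LinfOmega} {C : ℝ} (h : ∀ t, |a.1 t| ≤ C) :
    ‖a‖ ≤ C :=
  ciSup_le h

theorem exists_isLUB_range {ι : Type*} [Countable ι] [Nonempty ι] (x : ι → LinfOmega)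
    {C : ℝ} (hC : ∀ i, ‖x i‖ ≤ C) : ∃ x₀ : LinfOmega, IsLUB (Set.range x) x₀ := by
  have hpt : ∀ i t, |(x i).1 t| ≤ C := fun i => abs_apply_le_of_norm_le (hC i)
  have hbdd : ∀ t, BddAbove (Set.range fun i => (x i).1 t) :=
    fun t => ⟨C, Set.forall_mem_range.2 fun i => (abs_le.1 (hpt i t)).2⟩
  set f : ℝ → ℝ := fun t => ⨆ i, (x i).1 t
  have hf : f ∈ LinfOmega := by
    obtain ⟨i₀⟩ := ‹Nonempty ι›
    refine ⟨⟨C, fun t => abs_le.2 ⟨?_, ?_⟩⟩, ?_⟩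
    · exact (abs_le.1 (hpt i₀ t)).1.trans (le_ciSup (hbdd t) i₀)
    · exact ciSup_le fun i => (abs_le.1 (hpt i t)).2
    · refine (Set.countable_iUnion fun i => (x i).2.2).mono fun t ht => ?_
      by_contra hnot
      simp only [Set.mem_iUnion, Function.mem_support, not_exists, not_not] at hnot
      exact ht (by simp [f, hnot])
  refine ⟨⟨f, hf⟩, Set.forall_mem_range.2 fun i t => le_ciSup (hbdd t) i, fun y hy t => ?_⟩
  exact ciSup_le fun i => hy ⟨i, rfl⟩ t

theorem exists_notMem_apply_eq_zero (y : LinfOmega) (s : Finset ℝ) :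
    ∃ t ∉ s, y.1 t = 0 := by
  by_contra! h
  refine Cardinal.not_countable_real ((s.countable_toSet.union y.2.2).mono fun t _ => ?_)
  by_cases ht : t ∈ s
  · exact Or.inl ht
  · exact Or.inr (h t ht)

end LinfOmega

theorem finIndicator_apply (s : Finset ℝ) (t : ℝ) :
    (finIndicator s).1 t = if t ∈ s then 1 else 0 := rfl

theorem monotone_finIndicator : Monotone finIndicator := fun s s' hss t => by
  simp only [finIndicator_apply]
  split_ifs with hs hs' hs'
  · exact le_rfl
  · exact absurd (hss hs) hs'
  · exact zero_le_one
  · exact le_rfl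

theorem norm_finIndicator_le (s : Finset ℝ) : ‖finIndicator s‖ ≤ 1 :=
  LinfOmega.norm_le_of_forall_abs_apply_le fun t => by
    rw [finIndicator_apply]
    split_ifs <;> norm_num

theorem not_oCauchyNet_finIndicator : ¬ OCauchyNet finIndicator := by
  rintro ⟨D, ⟨y, hyD⟩, -, -, hconv⟩
  obtain ⟨⟨a, b⟩, hy⟩ := hconv y hyD
  obtain ⟨t, ht, hyt⟩ := LinfOmega.exists_notMem_apply_eq_zero y (a ∪ b)
  have hle := hy (insert t (a ∪ b), a ∪ b)
    ⟨Finset.subset_union_left.trans (Finset.subset_insert _ _), Finset.subset_union_right⟩ t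
  norm_num [finIndicator_apply, ht, hyt] at hle

/-- the identity on `ℓ^∞_ω(ℝ)` is σ-Levi but not quasi Levi: the net of
indicator functions of finite subsets of `ℝ` (directed by inclusion) is norm-bounded and
increasing but not order-Cauchy. -/
theorem id_linfOmega_sigmaLevi_not_qLevi :
    IsSigmaLeviMap (id : LinfOmega → LinfOmega) ∧
    ¬ IsQLeviMap (id : LinfOmega → LinfOmega) ∧
    Monotone finIndicator ∧ (∃ C, ∀ s, ‖finIndicator s‖ ≤ C) ∧
    ¬ OCauchyNet finIndicator := by
  refine ⟨?_, fun hQ => not_oCauchyNet_finIndicator ?_, monotone_finIndicator,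
    ⟨1, norm_finIndicator_le⟩, not_oCauchyNet_finIndicator⟩
  · exact isSigmaLeviMap_id_of_exists_isLUB fun x _ ⟨_, hC⟩ => LinfOmega.exists_isLUB_range x hC
  · exact hQ (Finset ℝ) finIndicator monotone_finIndicator ⟨1, norm_finIndicator_le⟩
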